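/- arXiv:2204.08044 — 2 statements merged into one kernel-verified Lean document; each statement's English description precedes it below -/
import Mathlib

section
/- Fix n agents, a finite nonempty set 𝒜 of alternatives, and for each agent i a valuation v_i : 𝒜 × (ℝ≥0)^n → ℝ≥0 that is nondecreasing in every signal coordinate and submodular over signals (SOS). For a signal profile s ∈ (ℝ≥0)^n, A ⊆ [n] and i ∈ [n], let s^{A,i} ∈ (ℝ≥0)^n denote the vector that agrees with s on coordinates in A ∪ {i} and is 0 on all other coordinates. Then for every s: 2^{−n} · Σ_{A ⊆ [n]} max_{a∈𝒜} Σ_{i∉A} v_i(a; s^{A,i}) ≥ (1/4) · max_{a∈𝒜} Σ_{i∈[n]} v_i(a; s). (This is the welfare guarantee of the Random-Sampling-VCG mechanism, which samples A ⊆ [n] uniformly at random and allocates an alternative maximizing Σ_{i∉A} v_i(a; s^{A,i}).) -/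
/-! Fix a welfare-maximizing alternative `a`. On zero-masked profiles `s_B` (equal to `s` on `B`
and `0` elsewhere), SOS says exactly that `B ↦ vᵢ(a; s_B)` is submodular. For `i ∉ A` the sets
`A ∪ {i}` and `Aᶜ` cover `[n]` and meet only in `i`, so submodularity and nonnegativity give
`vᵢ(a; s) ≤ vᵢ(a; s^{A,i}) + vᵢ(a; s^{Aᶜ \ {i}, i})`. Since `A ↦ Aᶜ \ {i}` is an involution on the
sets avoiding `i`, summing over all pairs `i ∉ A` shows that the sampled welfare of `a` is at
least half of `∑_A ∑_{i ∉ A} vᵢ(a; s) = 2ⁿ⁻¹ · OPT`, and the mechanism does at least as well as `a`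
for every `A`. -/

open Finset

noncomputable section

/-- `v` is submodular over signals (SOS): for every coordinate `i` and all signal
profiles `s ≤ s'` (coordinatewise, with `s` nonnegative),
`v(s'ᵢ, s₋ᵢ) − v(s) ≥ v(s') − v(sᵢ, s'₋ᵢ)`. -/
def SOSfun {n : ℕ} (v : (Fin n → ℝ) → ℝ) : Prop :=
  ∀ (i : Fin n) (s s' : Fin n → ℝ), (∀ j, 0 ≤ s j) → (∀ j, s j ≤ s' j) →
    v (Function.update s i (s' i)) - v s ≥ v s' - v (Function.update s' i (s i))

/-- `maskS A i s` agrees with `s` on `A ∪ {i}` and is `0` on all other coordinates. -/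
def maskS {n : ℕ} (A : Finset (Fin n)) (i : Fin n) (s : Fin n → ℝ) : Fin n → ℝ :=
  fun j => if j ∈ A ∨ j = i then s j else 0

open Function

lemma Finset.piecewise_zero_le_piecewise_zero {ι M : Type*} [Preorder M] [Zero M] {f : ι → M}
    (hf : 0 ≤ f) {B B' : Finset ι} [DecidablePred (· ∈ B)] [DecidablePred (· ∈ B')]
    (hBB' : B ⊆ B') : B.piecewise f 0 ≤ B'.piecewise f 0 := by
  intro j
  by_cases hj : j ∈ B
  · simp [hj, hBB' hj]
  · rw [piecewise_eq_of_notMem _ _ _ hj]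
    exact B'.le_piecewise_of_le_of_le hf le_rfl j

def DiminishingReturns {α β : Type*} [DecidableEq α] [Sub β] [LE β] (f : Finset α → β) : Prop :=
  ∀ ⦃B B' : Finset α⦄ ⦃i : α⦄, B ⊆ B' → i ∉ B' → f (insert i B') - f B' ≤ f (insert i B) - f B

theorem DiminishingReturns.union_sub_le_union_sub {α β : Type*} [DecidableEq α] [AddCommGroup β]
    [PartialOrder β] [IsOrderedAddMonoid β] {f : Finset α → β} (hf : DiminishingReturns f)
    {X Y Z : Finset α} (hXY : Disjoint X Y) (hZY : Z ⊆ Y) :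
    f (X ∪ Y) - f Y ≤ f (X ∪ Z) - f Z := by
  induction X using Finset.induction_on with
  | empty => simp
  | @insert i X hiX ih =>
    rw [disjoint_insert_left] at hXY
    have hi : i ∉ X ∪ Y := by simp [hiX, hXY.1]
    calc f (insert i X ∪ Y) - f Y
        = (f (insert i (X ∪ Y)) - f (X ∪ Y)) + (f (X ∪ Y) - f Y) := by
          rw [insert_union, sub_add_sub_cancel]
      _ ≤ (f (insert i (X ∪ Z)) - f (X ∪ Z)) + (f (X ∪ Z) - f Z) :=
          add_le_add (hf (union_subset_union_right hZY) hi) (ih hXY.2)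
      _ = f (insert i X ∪ Z) - f Z := by rw [insert_union, sub_add_sub_cancel]

theorem SOSfun.diminishingReturns_piecewise {n : ℕ} {v : (Fin n → ℝ) → ℝ} (hv : SOSfun v)
    {s : Fin n → ℝ} (hs : 0 ≤ s) :
    DiminishingReturns fun B : Finset (Fin n) ↦ v (B.piecewise s 0) := by
  intro B B' i hB hi
  have hiB : i ∉ B := fun h ↦ hi (hB h)
  have hsos := hv i (B.piecewise s 0) ((insert i B').piecewise s 0)
    (B.le_piecewise_of_le_of_le hs le_rfl)
    (piecewise_zero_le_piecewise_zero hs (hB.trans (subset_insert i B')))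
  have e₁ : update (B.piecewise s 0) i ((insert i B').piecewise s 0 i) =
      (insert i B).piecewise s 0 := by
    rw [piecewise_insert_self, piecewise_insert]
  have e₂ : update ((insert i B').piecewise s 0) i (B.piecewise s 0 i) = B'.piecewise s 0 := by
    rw [piecewise_eq_of_notMem _ _ _ hiB, piecewise_insert, update_idem,
      update_piecewise_of_notMem _ _ _ hi, update_eq_self]
  rw [e₁, e₂] at hsos
  dsimp only
  linarith

lemma maskS_eq_piecewise {n : ℕ} (A : Finset (Fin n)) (i : Fin n) (s : Fin n → ℝ) :
    maskS A i s = (insert i A).piecewise s 0 := by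
  funext j
  simp [maskS, Finset.piecewise, or_comm]

theorem SOSfun.le_maskS_add_maskS {n : ℕ} {v : (Fin n → ℝ) → ℝ} (hv : SOSfun v)
    (hnn : ∀ t, 0 ≤ t → 0 ≤ v t) {s : Fin n → ℝ} (hs : 0 ≤ s) {A : Finset (Fin n)} {i : Fin n}
    (hi : i ∉ A) : v s ≤ v (maskS A i s) + v (maskS (Aᶜ.erase i) i s) := by
  have hiAc : i ∈ Aᶜ := mem_compl.2 hi
  have hdisj : Disjoint (Aᶜ.erase i) (insert i A) := by
    rw [disjoint_insert_right]
    exact ⟨notMem_erase i _, disjoint_of_subset_left (erase_subset i _) disjoint_compl_left⟩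
  have hcover : Aᶜ.erase i ∪ insert i A = univ := by
    rw [union_insert, ← insert_union, insert_erase hiAc, union_comm, union_compl]
  have hsub := (hv.diminishingReturns_piecewise hs).union_sub_le_union_sub hdisj
    (singleton_subset_iff.2 (mem_insert_self i A))
  rw [hcover, piecewise_univ, union_singleton, insert_erase hiAc] at hsub
  rw [maskS_eq_piecewise, maskS_eq_piecewise, insert_erase hiAc]
  have hsingleton := hnn _ (({i} : Finset (Fin n)).le_piecewise_of_le_of_le hs le_rfl)
  linarith

theorem Finset.sum_sum_compl_erase {α β : Type*} [Fintype α] [DecidableEq α] [AddCommMonoid β]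
    (g : Finset α → α → β) : ∑ A, ∑ i ∈ Aᶜ, g (Aᶜ.erase i) i = ∑ A, ∑ i ∈ Aᶜ, g A i := by
  have hinv : ∀ p ∈ univ.sigma fun A : Finset α ↦ Aᶜ, (p.1ᶜ.erase p.2)ᶜ.erase p.2 = p.1 := by
    rintro ⟨A, i⟩ hp
    rw [mem_sigma, mem_compl] at hp
    rw [compl_erase, compl_compl, erase_insert hp.2]
  rw [sum_sigma', sum_sigma']
  refine sum_nbij' (fun p ↦ ⟨p.1ᶜ.erase p.2, p.2⟩) (fun p ↦ ⟨p.1ᶜ.erase p.2, p.2⟩)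
    (fun p _ ↦ by simp) (fun p _ ↦ by simp) (fun p hp ↦ Sigma.ext (hinv p hp) HEq.rfl)
    (fun p hp ↦ Sigma.ext (hinv p hp) HEq.rfl) fun _ _ ↦ rfl

theorem Finset.two_mul_sum_sum_compl {α β : Type*} [Fintype α] [DecidableEq α]
    [Semiring β] (f : α → β) :
    2 * ∑ A : Finset α, ∑ i ∈ Aᶜ, f i = 2 ^ Fintype.card α * ∑ i, f i := by
  have hswap : ∑ A : Finset α, ∑ i ∈ Aᶜ, f i = ∑ A : Finset α, ∑ i ∈ A, f i :=
    Fintype.sum_bijective compl compl_involutive.bijective _ _ fun _ ↦ rfl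
  calc 2 * ∑ A : Finset α, ∑ i ∈ Aᶜ, f i
      = ∑ A : Finset α, (∑ i ∈ Aᶜ, f i + ∑ i ∈ A, f i) := by
        rw [sum_add_distrib, ← hswap, two_mul]
    _ = 2 ^ Fintype.card α * ∑ i, f i := by
        simp only [sum_compl_add_sum, sum_const, card_univ, Fintype.card_finset, nsmul_eq_mul,
          Nat.cast_pow, Nat.cast_ofNat]

theorem two_pow_mul_sum_le_four_mul_sum_maskS {n : ℕ} (v : Fin n → (Fin n → ℝ) → ℝ)
    (hnn : ∀ i t, 0 ≤ t → 0 ≤ v i t) (hv : ∀ i, SOSfun (v i)) {s : Fin n → ℝ} (hs : 0 ≤ s) :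
    2 ^ n * ∑ i, v i s ≤ 4 * ∑ A : Finset (Fin n), ∑ i ∈ Aᶜ, v i (maskS A i s) := by
  calc 2 ^ n * ∑ i, v i s = 2 * ∑ A : Finset (Fin n), ∑ i ∈ Aᶜ, v i s := by
        rw [two_mul_sum_sum_compl, Fintype.card_fin]
    _ ≤ 2 * ∑ A : Finset (Fin n), ∑ i ∈ Aᶜ, (v i (maskS A i s) + v i (maskS (Aᶜ.erase i) i s)) := by
        gcongr with A _ i hi
        exact (hv i).le_maskS_add_maskS (hnn i) hs (mem_compl.1 hi)
    _ = 4 * ∑ A : Finset (Fin n), ∑ i ∈ Aᶜ, v i (maskS A i s) := by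
        simp only [sum_add_distrib, sum_sum_compl_erase fun A i ↦ v i (maskS A i s)]
        ring

theorem random_sampling_vcg_welfare_general
    {n : ℕ} {Alt : Type*} [Fintype Alt] [Nonempty Alt]
    (v : Fin n → Alt → (Fin n → ℝ) → ℝ)
    (hnn : ∀ i a (s : Fin n → ℝ), (∀ j, 0 ≤ s j) → 0 ≤ v i a s)
    (hsos : ∀ i a, SOSfun (v i a))
    (s : Fin n → ℝ) (hs : ∀ j, 0 ≤ s j) :
    (1 / 2 ^ n : ℝ) *
        ∑ A : Finset (Fin n),
          Finset.univ.sup' Finset.univ_nonempty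
            (fun a : Alt => ∑ i ∈ Aᶜ, v i a (maskS A i s)) ≥
      (1 / 4 : ℝ) *
        Finset.univ.sup' Finset.univ_nonempty (fun a : Alt => ∑ i, v i a s) := by
  obtain ⟨a, -, ha⟩ := exists_mem_eq_sup' univ_nonempty fun a : Alt ↦ ∑ i, v i a s
  have hwelfare := two_pow_mul_sum_le_four_mul_sum_maskS (fun i ↦ v i a)
    (fun i ↦ hnn i a) (fun i ↦ hsos i a) hs
  have hsample : ∑ A : Finset (Fin n), ∑ i ∈ Aᶜ, v i a (maskS A i s) ≤
      ∑ A : Finset (Fin n), univ.sup' univ_nonempty fun a : Alt ↦ ∑ i ∈ Aᶜ, v i a (maskS A i s) :=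
    sum_le_sum fun A _ ↦ le_sup' (fun a : Alt ↦ ∑ i ∈ Aᶜ, v i a (maskS A i s)) (mem_univ a)
  rw [ha, ge_iff_le, one_div_mul_eq_div, one_div_mul_eq_div,
    div_le_div_iff₀ (by norm_num) (by positivity)]
  linarith

/-- The welfare guarantee of the Random-Sampling-VCG mechanism: for
nonnegative, nondecreasing, SOS valuations, sampling `A ⊆ [n]` uniformly and allocating an
alternative maximizing `∑_{i ∉ A} v_i(a; s^{A,i})` obtains, in expectation, at least a
quarter of the optimal social welfare. -/
theorem random_sampling_vcg_welfare
    {n : ℕ} {Alt : Type*} [Fintype Alt] [Nonempty Alt]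
    (v : Fin n → Alt → (Fin n → ℝ) → ℝ)
    (hnn : ∀ i a (s : Fin n → ℝ), (∀ j, 0 ≤ s j) → 0 ≤ v i a s)
    (hmono : ∀ i a (s s' : Fin n → ℝ), (∀ j, 0 ≤ s j) → (∀ j, s j ≤ s' j) →
      v i a s ≤ v i a s')
    (hsos : ∀ i a, SOSfun (v i a))
    (s : Fin n → ℝ) (hs : ∀ j, 0 ≤ s j) :
    (1 / 2 ^ n : ℝ) *
        ∑ A : Finset (Fin n),
          Finset.univ.sup' Finset.univ_nonempty
            (fun a : Alt => ∑ i ∈ Aᶜ, v i a (maskS A i s)) ≥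
      (1 / 4 : ℝ) *
        Finset.univ.sup' Finset.univ_nonempty (fun a : Alt => ∑ i, v i a s) :=
  random_sampling_vcg_welfare_general v hnn hsos s hs
end
end

section
/- Let v : (ℝ≥0)^n → ℝ≥0 be nondecreasing in every coordinate and submodular over signals (SOS). Fix i ∈ [n] and a signal profile s ∈ (ℝ≥0)^n. For A ⊆ [n]∖{i}, let s^A ∈ (ℝ≥0)^n denote the vector that agrees with s on coordinates in A ∪ {i} and is 0 on all other coordinates. Then 2^{−(n−1)} · Σ_{A ⊆ [n]∖{i}} v(s^A) ≥ (1/2) · v(s); that is, for A a uniformly random subset of [n]∖{i}, E_A[v(s^A)] ≥ v(s)/2. -/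
/-!
Let `T = [n] ∖ {i}` and write `s^A` for `maskS A i s`. Adding the coordinates of `B` one at a
time and using SOS at each step shows that marginal gains shrink as the profile grows, so for
disjoint `A, B ⊆ T` we get `v(s^{A ∪ B}) + v(s^∅) ≤ v(s^A) + v(s^B)`. Taking `B = T ∖ A` and
`v(s^∅) ≥ 0` gives `v(s) ≤ v(s^A) + v(s^{T ∖ A})`; summing over all `A ⊆ T`, and noting that
`A ↦ T ∖ A` permutes the subsets of `T`, gives `2^{n-1} v(s) ≤ 2 ∑_A v(s^A)`.
-/

open Finset

noncomputable section

namespace Finset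

variable {α β : Type*} [DecidableEq α]

lemma sum_powerset_sdiff [AddCommMonoid β] (T : Finset α) (f : Finset α → β) :
    ∑ A ∈ T.powerset, f (T \ A) = ∑ A ∈ T.powerset, f A := by
  refine sum_nbij' (T \ ·) (T \ ·) ?_ ?_ ?_ ?_ fun _ _ ↦ rfl <;> simp +contextual

lemma two_pow_card_nsmul_le_two_nsmul_sum_powerset [AddCommMonoid β] [PartialOrder β]
    [IsOrderedAddMonoid β] (T : Finset α) (f : Finset α → β) (c : β)
    (h : ∀ A ⊆ T, c ≤ f A + f (T \ A)) :
    2 ^ #T • c ≤ 2 • ∑ A ∈ T.powerset, f A := by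
  have hsum := sum_le_sum fun A hA ↦ h A (mem_powerset.mp hA)
  rwa [sum_add_distrib, sum_powerset_sdiff, ← two_nsmul, sum_const, card_powerset] at hsum

end Finset

section maskS

variable {n : ℕ} {A B : Finset (Fin n)} {i j : Fin n} {s : Fin n → ℝ}

lemma maskS_nonneg (A : Finset (Fin n)) (i : Fin n) (hs : 0 ≤ s) : 0 ≤ maskS A i s := by
  intro j
  unfold maskS
  split_ifs
  exacts [hs j, le_rfl]

lemma maskS_mono (i : Fin n) (hs : 0 ≤ s) (hAB : A ⊆ B) : maskS A i s ≤ maskS B i s := by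
  intro j
  unfold maskS
  split_ifs with hA hB hB
  exacts [le_rfl, absurd (hA.imp_left (@hAB j)) hB, hs j, le_rfl]

lemma update_maskS_eq_maskS_insert (A : Finset (Fin n)) (i j : Fin n) (s : Fin n → ℝ) :
    Function.update (maskS A i s) j (s j) = maskS (insert j A) i s := by
  ext k
  rcases eq_or_ne k j with rfl | hk
  · simp [maskS]
  · simp [maskS, hk]

lemma update_maskS_insert_zero (s : Fin n → ℝ) (hjA : j ∉ A) (hji : j ≠ i) :
    Function.update (maskS (insert j A) i s) j 0 = maskS A i s := by
  ext k
  rcases eq_or_ne k j with rfl | hk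
  · simp [maskS, hjA, hji]
  · simp [maskS, hk]

lemma maskS_compl_singleton (i : Fin n) (s : Fin n → ℝ) : maskS {i}ᶜ i s = s := by
  ext j
  simp [maskS, em']

end maskS

namespace SOSfun

variable {n : ℕ} {v : (Fin n → ℝ) → ℝ} {A B : Finset (Fin n)} {i j : Fin n} {s : Fin n → ℝ}

lemma maskS_insert_sub_le (hsos : SOSfun v) (hs : 0 ≤ s) (hBA : B ⊆ A) (hjA : j ∉ A)
    (hji : j ≠ i) :
    v (maskS (insert j A) i s) - v (maskS A i s) ≤
      v (maskS (insert j B) i s) - v (maskS B i s) := by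
  have h := hsos j (maskS B i s) (maskS (insert j A) i s) (maskS_nonneg B i hs)
    (maskS_mono i hs (hBA.trans (subset_insert j A)))
  have hjB : j ∉ B := fun h ↦ hjA (hBA h)
  have hA_j : maskS (insert j A) i s j = s j := by simp [maskS]
  have hB_j : maskS B i s j = 0 := by simp [maskS, hjB, hji]
  rw [hA_j, hB_j, update_maskS_eq_maskS_insert, update_maskS_insert_zero s hjA hji] at h
  linarith

lemma maskS_union_add_le (hsos : SOSfun v) (hs : 0 ≤ s) (hAB : Disjoint A B) (hiB : i ∉ B) :
    v (maskS (A ∪ B) i s) + v (maskS ∅ i s) ≤ v (maskS A i s) + v (maskS B i s) := by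
  induction B using Finset.induction_on with
  | empty => simp
  | @insert j B hjB ih =>
    rw [disjoint_insert_right] at hAB
    rw [mem_insert, not_or] at hiB
    have hjAB : j ∉ A ∪ B := by simp [hAB.1, hjB]
    have hstep := hsos.maskS_insert_sub_le hs subset_union_right hjAB (Ne.symm hiB.1)
    rw [union_insert]
    linarith [ih hAB.2 hiB.2]

end SOSfun

theorem sos_key_lemma_general
    {n : ℕ} (v : (Fin n → ℝ) → ℝ)
    (hnn : ∀ s : Fin n → ℝ, (∀ j, 0 ≤ s j) → 0 ≤ v s)
    (hsos : SOSfun v)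
    (i : Fin n) (s : Fin n → ℝ) (hs : ∀ j, 0 ≤ s j) :
    (1 / 2 ^ (n - 1) : ℝ) * ∑ A ∈ ({i}ᶜ : Finset (Fin n)).powerset, v (maskS A i s) ≥
      v s / 2 := by
  have hpair : ∀ A ⊆ ({i}ᶜ : Finset (Fin n)),
      v s ≤ v (maskS A i s) + v (maskS ({i}ᶜ \ A) i s) := by
    intro A hA
    have h := hsos.maskS_union_add_le hs disjoint_sdiff (by simp : i ∉ {i}ᶜ \ A)
    rw [union_sdiff_of_subset hA, maskS_compl_singleton] at h
    linarith [hnn _ (maskS_nonneg ∅ i hs)]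
  have hsum := two_pow_card_nsmul_le_two_nsmul_sum_powerset _ _ _ hpair
  rw [card_compl, card_singleton, Fintype.card_fin, nsmul_eq_mul, nsmul_eq_mul] at hsum
  push_cast at hsum
  rw [ge_iff_le, one_div, inv_mul_eq_div, le_div_iff₀ (by positivity)]
  linarith

/-- Key Lemma. For a nonnegative, nondecreasing SOS function `v`, a
coordinate `i`, and a nonnegative signal profile `s`: the average over all subsets
`A ⊆ [n] ∖ {i}` of `v(s^A)`, where `s^A` agrees with `s` on `A ∪ {i}` and is `0`
elsewhere, is at least `v(s)/2`. -/
theorem sos_key_lemma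
    {n : ℕ} (v : (Fin n → ℝ) → ℝ)
    (hnn : ∀ s : Fin n → ℝ, (∀ j, 0 ≤ s j) → 0 ≤ v s)
    (hmono : ∀ s s' : Fin n → ℝ, (∀ j, 0 ≤ s j) → (∀ j, s j ≤ s' j) → v s ≤ v s')
    (hsos : SOSfun v)
    (i : Fin n) (s : Fin n → ℝ) (hs : ∀ j, 0 ≤ s j) :
    (1 / 2 ^ (n - 1) : ℝ) * ∑ A ∈ ({i}ᶜ : Finset (Fin n)).powerset, v (maskS A i s) ≥
      v s / 2 :=
  sos_key_lemma_general v hnn hsos i s hs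
end
end
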